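/- Let P be an irreducible row-stochastic matrix on a nonempty finite type X and fix a state x̃ ∈ X. Define the taboo matrix Q by Q(x,y) = P(x,y) for y ≠ x̃ and Q(x,x̃) = 0. Then the matrix I − Q (identity minus Q) is invertible. -/

import Mathlib

/-!
Suppose `(1 - Q) v = 0`, i.e. `Q v = v`, and let `x₀` maximise `|v|`. Then `Qᵐ v = v` for every
`m`, and since `Qᵐ` is nonnegative, `|v x₀| ≤ (∑ y, Qᵐ x₀ y) * |v x₀|`. By irreducibility some
`Pᵐ` reaches `x̃` from `x₀` with positive probability; as `Qᵐ ≤ Pᵐ` entrywise and `Qᵐ` never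
enters `x̃`, the row sum of `Qᵐ` at `x₀` is at most `1 - Pᵐ x₀ x̃ < 1`. Hence `v x₀ = 0`, so `v = 0`.
-/

namespace Matrix

variable {X α : Type*} [Fintype X]

lemma pow_mulVec_eq_self [DecidableEq X] [Semiring α] {A : Matrix X X α} {v : X → α}
    (hv : A *ᵥ v = v) (n : ℕ) : (A ^ n) *ᵥ v = v := by
  induction n with
  | zero => exact one_mulVec v
  | succ n ih => rw [pow_succ, ← mulVec_mulVec, hv, ih]

lemma pow_apply_le_pow_apply [DecidableEq X] [Semiring α] [PartialOrder α] [IsOrderedRing α]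
    {A B : Matrix X X α} (hA : ∀ x y, 0 ≤ A x y) (hAB : ∀ x y, A x y ≤ B x y) (n : ℕ)
    (x y : X) : (A ^ n) x y ≤ (B ^ n) x y := by
  induction n generalizing y with
  | zero => rfl
  | succ n ih =>
    rw [pow_succ, pow_succ, mul_apply, mul_apply]
    exact Finset.sum_le_sum fun z _ => mul_le_mul (ih z) (hAB z y) (hA z y)
      (pow_apply_nonneg (fun x y => (hA x y).trans (hAB x y)) n x z)

lemma pow_apply_eq_zero_of_forall_apply_eq_zero [DecidableEq X] [Semiring α]
    {A : Matrix X X α} {z : X} (hz : ∀ x, A x z = 0) {n : ℕ} (hn : n ≠ 0) (x : X) :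
    (A ^ n) x z = 0 := by
  obtain ⟨k, rfl⟩ := Nat.exists_eq_succ_of_ne_zero hn
  rw [pow_succ, mul_apply]
  exact Finset.sum_eq_zero fun y _ => by rw [hz, mul_zero]

lemma sum_pow_apply_add_le_sum_pow_apply [DecidableEq X] [Semiring α] [PartialOrder α]
    [IsOrderedRing α] {A B : Matrix X X α} (hA : ∀ x y, 0 ≤ A x y)
    (hAB : ∀ x y, A x y ≤ B x y) {z : X} (hz : ∀ x, A x z = 0) {n : ℕ} (hn : n ≠ 0) (x : X) :
    ∑ y, (A ^ n) x y + (B ^ n) x z ≤ ∑ y, (B ^ n) x y := by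
  rw [← Finset.add_sum_erase _ _ (Finset.mem_univ z),
    ← Finset.add_sum_erase _ (fun y => (B ^ n) x y) (Finset.mem_univ z),
    pow_apply_eq_zero_of_forall_apply_eq_zero hz hn, zero_add, add_comm]
  gcongr with y
  exact pow_apply_le_pow_apply hA hAB n x y

lemma eq_zero_of_mulVec_eq_self_of_sum_lt_one [Ring α] [LinearOrder α] [IsStrictOrderedRing α]
    {A : Matrix X X α} (hA : ∀ x y, 0 ≤ A x y) {v : X → α} (hv : A *ᵥ v = v) {x₀ : X}
    (hmax : ∀ y, |v y| ≤ |v x₀|) (hsum : ∑ y, A x₀ y < 1) : v = 0 := by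
  have hbound : |v x₀| ≤ (∑ y, A x₀ y) * |v x₀| :=
    calc |v x₀| = |∑ y, A x₀ y * v y| := by rw [← congrFun hv x₀]; rfl
      _ ≤ ∑ y, A x₀ y * |v y| := by
        refine (Finset.abs_sum_le_sum_abs _ _).trans_eq (Finset.sum_congr rfl fun y _ => ?_)
        rw [abs_mul, abs_of_nonneg (hA x₀ y)]
      _ ≤ ∑ y, A x₀ y * |v x₀| :=
        Finset.sum_le_sum fun y _ => mul_le_mul_of_nonneg_left (hmax y) (hA x₀ y)
      _ = (∑ y, A x₀ y) * |v x₀| := (Finset.sum_mul ..).symm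
  have hx₀ : |v x₀| ≤ 0 := not_lt.1 fun h => (mul_lt_of_lt_one_left h hsum).not_ge hbound
  funext y
  exact abs_nonpos_iff.1 ((hmax y).trans hx₀)

end Matrix

open Matrix in
/-- for an irreducible row-stochastic matrix, the identity minus the taboo
matrix (transitions avoiding a fixed state x̃) is invertible. -/
theorem stmt_13 {X : Type*} [Fintype X] [DecidableEq X] [Nonempty X] (P : Matrix X X ℝ)
    (hPnonneg : ∀ x y, 0 ≤ P x y) (hProw : ∀ x, ∑ y, P x y = 1)
    (hirr : ∀ x y, ∃ n, 1 ≤ n ∧ 0 < (P ^ n) x y)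
    (xt : X) (Q : Matrix X X ℝ)
    (hQ : ∀ x y, Q x y = if y = xt then 0 else P x y) :
    IsUnit (1 - Q) := by
  have hP : P ∈ rowStochastic ℝ X := mem_rowStochastic_iff_sum.2 ⟨hPnonneg, hProw⟩
  have hQnonneg : ∀ x y, 0 ≤ Q x y := fun x y => by
    rw [hQ]; split_ifs <;> simp [hPnonneg]
  have hQP : ∀ x y, Q x y ≤ P x y := fun x y => by
    rw [hQ]; split_ifs <;> simp [hPnonneg]
  have hQxt : ∀ x, Q x xt = 0 := by simp [hQ]
  rw [isUnit_iff_isUnit_det, isUnit_iff_ne_zero, ne_eq, ← exists_mulVec_eq_zero_iff]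
  rintro ⟨v, hv0, hv⟩
  have hQv : Q *ᵥ v = v := by rw [sub_mulVec, one_mulVec, sub_eq_zero] at hv; exact hv.symm
  obtain ⟨x₀, hmax⟩ := Finite.exists_max fun x => |v x|
  obtain ⟨m, hm, hreach⟩ := hirr x₀ xt
  have hrow : ∑ y, (Q ^ m) x₀ y < 1 := by
    have := sum_pow_apply_add_le_sum_pow_apply hQnonneg hQP hQxt (Nat.one_le_iff_ne_zero.1 hm) x₀
    linarith [sum_row_of_mem_rowStochastic (pow_mem hP m) x₀]
  exact hv0 (eq_zero_of_mulVec_eq_self_of_sum_lt_one (pow_apply_nonneg hQnonneg m)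
    (pow_mulVec_eq_self hQv m) hmax hrow)
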